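/- arXiv:2505.10929 — 5 statements merged into one kernel-verified Lean document; each statement's English description precedes it below -/
import Mathlib

section
/- For all positive integers d and n, one has n·disp_C(n,d) = dens(n,d) = n·V(φ(n)); that is, the minimal spherical cap dispersion times n equals the minimal spherical covering density, which in turn equals n times the normalized volume of a cap of geodesic radius equal to the minimal geodesic covering radius. -/
open scoped Real InnerProductSpace
open MeasureTheory Filter

noncomputable section

/-- The `d`-dimensional unit sphere `S^d`, as a subtype of `ℝ^{d+1}`. -/
abbrev Sph (d : ℕ) := Metric.sphere (0 : EuclideanSpace ℝ (Fin (d + 1))) 1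

/-- Geodesic distance `ρ(x,y) = arccos⟨x,y⟩` on the sphere. -/
def geoDist {d : ℕ} (x y : Sph d) : ℝ :=
  Real.arccos ⟪(x : EuclideanSpace ℝ (Fin (d + 1))), (y : EuclideanSpace ℝ (Fin (d + 1)))⟫_ℝ

/-- Spherical cap (geodesic ball) with center `x` and geodesic radius `φ`. -/
def cap {d : ℕ} (x : Sph d) (φ : ℝ) : Set (Sph d) :=
  {y : Sph d | geoDist x y ≤ φ}

/-- The normalized Lebesgue (surface) measure `σ` on the sphere `S^d`. -/
def sphMeasure (d : ℕ) : Measure (Sph d) :=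
  ((volume : Measure (EuclideanSpace ℝ (Fin (d + 1)))).toSphere Set.univ)⁻¹ •
    (volume : Measure (EuclideanSpace ℝ (Fin (d + 1)))).toSphere

/-- Spherical cap dispersion `disp_C(P)` of a point set `P ⊆ S^d`:
the supremum of `σ(C)` over caps `C` avoiding `P`. -/
def capDisp {d : ℕ} (P : Set (Sph d)) : ℝ :=
  sSup {v : ℝ | ∃ x : Sph d, ∃ φ ∈ Set.Icc (0 : ℝ) π,
    cap x φ ∩ P = ∅ ∧ v = (sphMeasure d (cap x φ)).toReal}

/-- Minimal spherical cap dispersion `disp_C(n, d)`: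
the infimum of `disp_C({x_1, …, x_n})` over `x_1, …, x_n ∈ S^d`. -/
def minCapDisp (d n : ℕ) : ℝ :=
  sInf {v : ℝ | ∃ x : Fin n → Sph d, v = capDisp (Set.range x)}

/-- Normalized volume `V(φ)` of a spherical cap of geodesic radius `φ`
(centered at the first standard basis vector). -/
def capVol (d : ℕ) (φ : ℝ) : ℝ :=
  (sphMeasure d (cap (⟨EuclideanSpace.single 0 1, by
    simp [EuclideanSpace.norm_single]⟩ : Sph d) φ)).toReal

/-- Minimal geodesic covering radius `φ(n)` of `S^d` with `n` caps. -/
def covRad (d n : ℕ) : ℝ :=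
  sInf {φ : ℝ | 0 < φ ∧ ∃ x : Fin n → Sph d, (⋃ i, cap (x i) φ) = Set.univ}

/-- Minimal spherical covering density `dens(n, d)`:
the infimal total normalized volume of `n` equal caps covering `S^d`. -/
def minDens (d n : ℕ) : ℝ :=
  sInf {s : ℝ | ∃ φ ∈ Set.Ioc (0 : ℝ) π, ∃ x : Fin n → Sph d,
    (⋃ i, cap (x i) φ) = Set.univ ∧
    s = ∑ i : Fin n, (sphMeasure d (cap (x i) φ)).toReal}

/-!
Let `W = φ(n)`. The configurations covering `S^d` by caps of radius `φ` form a closed set of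
pairs `(x, φ)`, so by compactness some `x` covers with radius exactly `W`; and `W > 0` because
points are null. Rotations act transitively and preserve `σ`, so every cap of radius `φ` has
measure `V(φ)`, and any admissible covering has density `n V(φ) ≥ n V(W)`, with equality for `x`.

A cap missing every point of a covering of radius `W` has radius `< W`, so `disp(x) ≤ V(W)`.
Conversely, for any `n` points and any `ψ < W` the caps of radius `ψ` around them do not cover,
so some cap of radius `ψ` misses them all and the dispersion is at least `V(ψ)`; letting `ψ → W`
needs `V` to be left-continuous, i.e. cap boundaries `{y | ⟪e, y⟫ = c}` to be null. For `|c| < 1`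
the cone `{z | ⟪e, z⟫ = c ‖z‖}` over such a slice meets none of its translates along `e`
(moving by `t e` changes `⟪e, z⟫` by `t` but `c ‖z‖` by at most `|c| t`), so it is Lebesgue-null;
for `|c| = 1` the slice is a single point.
-/

open Function Metric Set
open scoped Pointwise

section InnerProductSpace

variable {F : Type*} [NormedAddCommGroup F] [InnerProductSpace ℝ F]

theorem pairwise_disjoint_vadd_setOf_inner_eq_mul_norm {e : F} (he : ‖e‖ = 1) {c : ℝ}
    (hc : |c| < 1) : Pairwise (Disjoint on fun t : ℝ => t • e +ᵥ {z : F | ⟪e, z⟫_ℝ = c * ‖z‖}) := by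
  intro s t hst
  refine Set.disjoint_left.2 ?_
  rintro _ ⟨a, ha, rfl⟩ ⟨b, hb, hab⟩
  have hdiff : a - b = (t - s) • e := by
    simp only [vadd_eq_add] at hab
    linear_combination (norm := module) -hab
  have hinner : t - s = c * (‖a‖ - ‖b‖) := by
    calc t - s = ⟪e, a - b⟫_ℝ := by
          rw [hdiff, real_inner_smul_right, real_inner_self_eq_norm_sq, he]; ring
      _ = c * (‖a‖ - ‖b‖) := by rw [inner_sub_right, ha, hb]; ring
  have hlip : |‖a‖ - ‖b‖| ≤ |t - s| := by
    simpa [hdiff, norm_smul, he] using abs_norm_sub_norm_le a b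
  have hts : |t - s| ≤ |c| * |t - s| := by
    calc |t - s| = |c| * |‖a‖ - ‖b‖| := by rw [hinner, abs_mul]
      _ ≤ |c| * |t - s| := by gcongr
  have : |t - s| = 0 := by nlinarith [abs_nonneg (t - s)]
  exact hst (sub_eq_zero.1 (abs_eq_zero.1 this)).symm

theorem subsingleton_setOf_inner_eq_of_abs_eq_one {x : F} (hx : ‖x‖ = 1) {c : ℝ} (hc : |c| = 1) :
    {y : sphere (0 : F) 1 | ⟪x, (y : F)⟫_ℝ = c}.Subsingleton := by
  intro y₁ hy₁ y₂ hy₂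
  rw [mem_ofPred_eq] at hy₁ hy₂
  have h₁ := norm_eq_of_mem_sphere y₁
  have h₂ := norm_eq_of_mem_sphere y₂
  apply Subtype.ext
  rcases (abs_eq zero_le_one).1 hc with rfl | rfl
  · rw [inner_eq_one_iff_of_norm_eq_one hx h₁] at hy₁
    rw [inner_eq_one_iff_of_norm_eq_one hx h₂] at hy₂
    rw [← hy₁, ← hy₂]
  · rw [inner_eq_neg_one_iff_of_norm_eq_one hx h₁] at hy₁
    rw [inner_eq_neg_one_iff_of_norm_eq_one hx h₂] at hy₂
    rw [← neg_inj, ← hy₁, ← hy₂]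

end InnerProductSpace

namespace MeasureTheory

theorem measure_eq_zero_of_pairwise_disjoint_vadd {G ι : Type*} [AddGroup G] [MeasurableSpace G]
    [MeasurableAdd G] {μ : Measure G} [SFinite μ] [μ.IsAddLeftInvariant] [Uncountable ι]
    {K : Set G} (hK : MeasurableSet K) (v : ι → G)
    (hv : Pairwise (Disjoint on fun i => v i +ᵥ K)) : μ K = 0 := by
  by_contra hμK
  have hcount :=
    Measure.countable_meas_pos_of_disjoint_iUnion (μ := μ) (fun i => hK.const_vadd (v i)) hv
  simp only [measure_vadd, pos_iff_ne_zero, ne_eq, hμK, not_false_eq_true, ofPred_true] at hcount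
  exact not_countable_univ hcount

namespace Measure

section NormedSpace

variable {E : Type*} [NormedAddCommGroup E] [NormedSpace ℝ E] [MeasurableSpace E] [BorelSpace E]

theorem toSphere_eq_of_image_eq (μ : Measure E) {f : E ≃ₗᵢ[ℝ] E} (hf : MeasurePreserving f μ μ)
    {s t : Set (sphere (0 : E) 1)} (hs : MeasurableSet s) (ht : MeasurableSet t)
    (hst : f '' ((↑) '' s) = (↑) '' t) : μ.toSphere t = μ.toSphere s := by
  have hsmul : Ioo (0 : ℝ) 1 • f '' ((↑) '' s) = f '' (Ioo (0 : ℝ) 1 • (↑) '' s) := by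
    simp only [← image2_smul, image2_image_right, image_image2, map_smul]
  rw [toSphere_apply' μ hs, toSphere_apply' μ ht, ← hst, hsmul,
    ← hf.measure_preimage_emb f.toHomeomorph.measurableEmbedding, f.injective.preimage_image]

variable [FiniteDimensional ℝ E] (μ : Measure E) [μ.IsAddHaarMeasure]

theorem toSphere_singleton (hE : 1 < Module.finrank ℝ E) (x : sphere (0 : E) 1) :
    μ.toSphere {x} = 0 := by
  have hspan : Submodule.span ℝ {(x : E)} ≠ ⊤ := fun h => by
    have := finrank_span_le_card (R := ℝ) ({(x : E)} : Set E)
    rw [h, finrank_top] at this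
    simp only [toFinset_singleton, Finset.card_singleton] at this
    omega
  rw [toSphere_apply' μ (measurableSet_singleton x), image_singleton,
    measure_mono_null _ (addHaar_submodule μ _ hspan), mul_zero]
  rintro _ ⟨r, -, _, rfl, rfl⟩
  exact Submodule.smul_mem _ r (Submodule.mem_span_singleton_self _)

end NormedSpace

variable {F : Type*} [NormedAddCommGroup F] [InnerProductSpace ℝ F] [FiniteDimensional ℝ F]
  [MeasurableSpace F] [BorelSpace F] (μ : Measure F) [μ.IsAddHaarMeasure]

theorem toSphere_setOf_inner_eq {e : F} (he : ‖e‖ = 1) {c : ℝ}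
    (hc : |c| < 1) : μ.toSphere {y | ⟪e, (y : F)⟫_ℝ = c} = 0 := by
  have hcone : MeasurableSet {z : F | ⟪e, z⟫_ℝ = c * ‖z‖} :=
    (isClosed_eq (by fun_prop) (by fun_prop)).measurableSet
  have hnull := measure_eq_zero_of_pairwise_disjoint_vadd (μ := μ) hcone _
    (pairwise_disjoint_vadd_setOf_inner_eq_mul_norm he hc)
  rw [toSphere_apply' μ (isClosed_eq (by fun_prop) continuous_const).measurableSet,
    measure_mono_null _ hnull, mul_zero]
  rintro _ ⟨r, hr, _, ⟨y, hy, rfl⟩, rfl⟩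
  simp only [mem_ofPred_eq] at hy
  simp [real_inner_smul_right, norm_smul, hy, abs_of_pos hr.1, mul_comm]

end Measure

end MeasureTheory

section Sphere

variable {d n : ℕ}

instance : IsProbabilityMeasure (sphMeasure d) :=
  have : NeZero (volume : Measure (EuclideanSpace ℝ (Fin (d + 1)))).toSphere :=
    ⟨Measure.toSphere_ne_zero _⟩
  isProbabilityMeasureSMul

instance : Nonempty (Sph d) := (NormedSpace.sphere_nonempty.2 zero_le_one).to_subtype

@[fun_prop]
theorem Continuous.geoDist {X : Type*} [TopologicalSpace X] {f g : X → Sph d}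
    (hf : Continuous f) (hg : Continuous g) : Continuous fun p => geoDist (f p) (g p) :=
  Real.continuous_arccos.comp ((continuous_subtype_val.comp hf).inner
    (continuous_subtype_val.comp hg))

theorem geoDist_nonneg (x y : Sph d) : 0 ≤ geoDist x y := Real.arccos_nonneg _

theorem geoDist_comm (x y : Sph d) : geoDist x y = geoDist y x := by
  rw [geoDist, geoDist, real_inner_comm]

theorem cos_geoDist (x y : Sph d) :
    Real.cos (geoDist x y) = ⟪(x : EuclideanSpace ℝ (Fin (d + 1))), y⟫_ℝ := by
  have hx := norm_eq_of_mem_sphere x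
  have hy := norm_eq_of_mem_sphere y
  have h := abs_real_inner_le_norm (x : EuclideanSpace ℝ (Fin (d + 1))) y
  rw [hx, hy, one_mul, abs_le] at h
  exact Real.cos_arccos h.1 h.2

theorem isClosed_cap (x : Sph d) (φ : ℝ) : IsClosed (cap x φ) :=
  isClosed_le (by fun_prop) continuous_const

theorem cap_mono (x : Sph d) {φ ψ : ℝ} (h : φ ≤ ψ) : cap x φ ⊆ cap x ψ :=
  fun _ hy => le_trans hy h

theorem mem_cap_comm {x y : Sph d} {φ : ℝ} : y ∈ cap x φ ↔ x ∈ cap y φ := by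
  rw [cap, cap, mem_ofPred_eq, mem_ofPred_eq, geoDist_comm]

theorem iUnion_cap_pi {ι : Type*} [Nonempty ι] (x : ι → Sph d) : ⋃ i, cap (x i) π = univ :=
  eq_univ_of_forall fun _ => mem_iUnion.2 ⟨Classical.arbitrary ι, Real.arccos_le_pi _⟩

theorem image_coe_cap_eq
    {f : EuclideanSpace ℝ (Fin (d + 1)) ≃ₗᵢ[ℝ] EuclideanSpace ℝ (Fin (d + 1))} {x y : Sph d}
    (hxy : f x = y) (φ : ℝ) : f '' ((↑) '' cap x φ) = (↑) '' cap y φ := by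
  ext z
  constructor
  · rintro ⟨_, ⟨w, hw, rfl⟩, rfl⟩
    refine ⟨⟨f w, by simp [norm_eq_of_mem_sphere w]⟩, ?_, rfl⟩
    simpa only [cap, mem_ofPred_eq, geoDist, ← hxy, f.inner_map_map] using hw
  · rintro ⟨w, hw, rfl⟩
    refine ⟨f.symm w, ⟨⟨f.symm w, by simp [norm_eq_of_mem_sphere w]⟩, ?_, rfl⟩, by simp⟩
    simpa only [cap, mem_ofPred_eq, geoDist, ← hxy, f.inner_map_eq_flip] using hw

theorem sphMeasure_cap_eq (x y : Sph d) (φ : ℝ) :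
    sphMeasure d (cap x φ) = sphMeasure d (cap y φ) := by
  have hxy := Submodule.reflection_sub
    ((norm_eq_of_mem_sphere x).trans (norm_eq_of_mem_sphere y).symm)
  rw [sphMeasure, Measure.smul_apply, Measure.smul_apply,
    Measure.toSphere_eq_of_image_eq _ (LinearIsometryEquiv.measurePreserving _)
      (isClosed_cap x φ).measurableSet (isClosed_cap y φ).measurableSet (image_coe_cap_eq hxy φ)]

theorem toReal_sphMeasure_cap (x : Sph d) (φ : ℝ) :
    (sphMeasure d (cap x φ)).toReal = capVol d φ :=
  congrArg ENNReal.toReal (sphMeasure_cap_eq x _ φ)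

theorem capVol_mono : Monotone (capVol d) := fun _ _ h =>
  ENNReal.toReal_mono (measure_ne_top _ _) (measure_mono (cap_mono _ h))

theorem sphMeasure_singleton (hd : 1 ≤ d) (x : Sph d) : sphMeasure d {x} = 0 := by
  rw [sphMeasure, Measure.smul_apply,
    Measure.toSphere_singleton _ (by rw [finrank_euclideanSpace_fin]; omega), smul_zero]

theorem sphMeasure_setOf_geoDist_eq (hd : 1 ≤ d) (x : Sph d) (φ : ℝ) :
    sphMeasure d {y | geoDist x y = φ} = 0 := by
  have hx := norm_eq_of_mem_sphere x
  have hsub : {y | geoDist x y = φ} ⊆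
      {y | ⟪(x : EuclideanSpace ℝ (Fin (d + 1))), y⟫_ℝ = Real.cos φ} :=
    fun y hy => by rw [mem_ofPred_eq, ← cos_geoDist, hy]
  refine measure_mono_null hsub ?_
  rcases (Real.abs_cos_le_one φ).lt_or_eq with hlt | heq
  · rw [sphMeasure, Measure.smul_apply, Measure.toSphere_setOf_inner_eq _ hx hlt, smul_zero]
  · obtain h | ⟨z, h⟩ := (subsingleton_setOf_inner_eq_of_abs_eq_one hx heq).eq_empty_or_singleton
    · rw [h, measure_empty]
    · rw [h, sphMeasure_singleton hd]

theorem sphMeasure_cap_eq_iSup (hd : 1 ≤ d) (x : Sph d) {φ : ℝ} (hφ : 0 < φ) :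
    sphMeasure d (cap x φ) = ⨆ ψ : Ioo 0 φ, sphMeasure d (cap x ψ) := by
  have hmono : Monotone fun ψ : Ioo 0 φ => cap x ψ := fun _ _ h => cap_mono x h
  have hunion : ⋃ ψ : Ioo 0 φ, cap x ψ = cap x φ \ {y | geoDist x y = φ} := by
    ext y
    simp only [mem_iUnion, Set.mem_sdiff, cap, mem_ofPred_eq, Subtype.exists, mem_Ioo]
    constructor
    · rintro ⟨ψ, ⟨-, hψ⟩, hy⟩
      exact ⟨hy.trans hψ.le, (hy.trans_lt hψ).ne⟩
    · rintro ⟨hy, hne⟩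
      exact ⟨max (geoDist x y) (φ / 2), ⟨by positivity, max_lt (hy.lt_of_ne hne) (by linarith)⟩,
        le_max_left _ _⟩
  rw [← hmono.measure_iUnion, hunion, measure_sdiff_null (sphMeasure_setOf_geoDist_eq hd x φ)]

theorem capVol_le_of_forall_lt (hd : 1 ≤ d) {φ a : ℝ} (hφ : 0 < φ)
    (h : ∀ ψ ∈ Ioo 0 φ, capVol d ψ ≤ a) : capVol d φ ≤ a := by
  have ha : 0 ≤ a := ENNReal.toReal_nonneg.trans (h (φ / 2) ⟨by positivity, by linarith⟩)
  refine ENNReal.toReal_le_of_le_ofReal ha ?_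
  rw [sphMeasure_cap_eq_iSup hd _ hφ]
  refine iSup_le fun ψ => ?_
  rw [← ENNReal.ofReal_toReal (measure_ne_top _ _)]
  exact ENNReal.ofReal_le_ofReal (h ψ ψ.2)

theorem isClosed_setOf_iUnion_cap_eq_univ {ι : Type*} [Finite ι] :
    IsClosed {p : (ι → Sph d) × ℝ | ⋃ i, cap (p.1 i) p.2 = univ} := by
  have h : {p : (ι → Sph d) × ℝ | ⋃ i, cap (p.1 i) p.2 = univ} =
      ⋂ y, ⋃ i, {p | geoDist (p.1 i) y ≤ p.2} := by
    ext p
    simp [eq_univ_iff_forall, cap]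
  rw [h]
  exact isClosed_iInter fun y => isClosed_iUnion_of_finite fun i =>
    isClosed_le (by fun_prop) continuous_snd

theorem covRad_le {φ : ℝ} (hφ : 0 < φ) {x : Fin n → Sph d} (hx : ⋃ i, cap (x i) φ = univ) :
    covRad d n ≤ φ :=
  csInf_le ⟨0, fun _ h => h.1.le⟩ ⟨hφ, x, hx⟩

theorem covRad_le_pi (hn : 1 ≤ n) : covRad d n ≤ π :=
  have : Nonempty (Fin n) := ⟨⟨0, hn⟩⟩
  covRad_le Real.pi_pos (iUnion_cap_pi fun _ => Classical.arbitrary (Sph d))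

theorem exists_iUnion_cap_covRad_eq_univ (hn : 1 ≤ n) :
    ∃ x : Fin n → Sph d, ⋃ i, cap (x i) (covRad d n) = univ := by
  have : Nonempty (Fin n) := ⟨⟨0, hn⟩⟩
  have hclosed := isClosedMap_snd_of_compactSpace _
    (isClosed_setOf_iUnion_cap_eq_univ (d := d) (ι := Fin n))
  have hne : {φ : ℝ | 0 < φ ∧ ∃ x : Fin n → Sph d, ⋃ i, cap (x i) φ = univ}.Nonempty :=
    ⟨π, Real.pi_pos, fun _ => Classical.arbitrary (Sph d), iUnion_cap_pi _⟩
  have hsub : {φ : ℝ | 0 < φ ∧ ∃ x : Fin n → Sph d, ⋃ i, cap (x i) φ = univ} ⊆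
      Prod.snd '' {p : (Fin n → Sph d) × ℝ | ⋃ i, cap (p.1 i) p.2 = univ} := by
    rintro φ ⟨-, x, hx⟩
    exact ⟨(x, φ), hx, rfl⟩
  obtain ⟨⟨x, _⟩, hx, rfl⟩ := hclosed.closure_subset_iff.2 hsub
    (csInf_mem_closure hne ⟨0, fun _ h => h.1.le⟩)
  exact ⟨x, hx⟩

theorem covRad_pos (hd : 1 ≤ d) (hn : 1 ≤ n) : 0 < covRad d n := by
  obtain ⟨x, hx⟩ := exists_iUnion_cap_covRad_eq_univ (d := d) hn
  by_contra! h
  have hnull : sphMeasure d (⋃ i, cap (x i) (covRad d n)) = 0 :=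
    measure_iUnion_null fun i => measure_mono_null
      (fun y hy => le_antisymm (hy.trans h) (geoDist_nonneg _ _))
      (sphMeasure_setOf_geoDist_eq hd (x i) 0)
  rw [hx, measure_univ] at hnull
  exact one_ne_zero hnull

theorem capVol_le_capDisp {P : Set (Sph d)} {y : Sph d} {ψ : ℝ} (hψ : ψ ∈ Icc 0 π)
    (hy : cap y ψ ∩ P = ∅) : capVol d ψ ≤ capDisp P := by
  refine le_csSup ⟨1, ?_⟩ ⟨y, ψ, hψ, hy, (toReal_sphMeasure_cap y ψ).symm⟩
  rintro _ ⟨_, _, _, _, rfl⟩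
  exact ENNReal.toReal_le_of_le_ofReal zero_le_one (by simpa using prob_le_one)

theorem capDisp_range_le {ι : Type*} {x : ι → Sph d} {φ : ℝ} (hx : ⋃ i, cap (x i) φ = univ) :
    capDisp (range x) ≤ capVol d φ := by
  refine Real.sSup_le ?_ ENNReal.toReal_nonneg
  rintro _ ⟨y, ψ, -, hy, rfl⟩
  obtain ⟨i, hi⟩ := mem_iUnion.1 (hx ▸ mem_univ y)
  have hxi : x i ∉ cap y ψ := fun h => (hy ▸ ⟨h, mem_range_self i⟩ : x i ∈ (∅ : Set (Sph d)))
  rw [toReal_sphMeasure_cap]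
  exact capVol_mono ((not_le.1 hxi).le.trans (mem_cap_comm.1 hi))

theorem exists_cap_inter_range_eq_empty {ι : Type*} {x : ι → Sph d} {ψ : ℝ}
    (h : ⋃ i, cap (x i) ψ ≠ univ) : ∃ y, cap y ψ ∩ range x = ∅ := by
  obtain ⟨y, hy⟩ := (ne_univ_iff_exists_notMem _).1 h
  refine ⟨y, eq_empty_of_forall_notMem ?_⟩
  rintro _ ⟨hz, i, rfl⟩
  exact hy (mem_iUnion.2 ⟨i, mem_cap_comm.1 hz⟩)

theorem capVol_covRad_le_capDisp (hd : 1 ≤ d) (hn : 1 ≤ n) (x : Fin n → Sph d) :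
    capVol d (covRad d n) ≤ capDisp (range x) := by
  refine capVol_le_of_forall_lt hd (covRad_pos hd hn) fun ψ hψ => ?_
  obtain ⟨y, hy⟩ := exists_cap_inter_range_eq_empty fun hx => (covRad_le hψ.1 hx).not_gt hψ.2
  exact capVol_le_capDisp ⟨hψ.1.le, hψ.2.le.trans (covRad_le_pi hn)⟩ hy

theorem minCapDisp_eq (hd : 1 ≤ d) (hn : 1 ≤ n) : minCapDisp d n = capVol d (covRad d n) := by
  obtain ⟨x, hx⟩ := exists_iUnion_cap_covRad_eq_univ (d := d) hn
  refine IsLeast.csInf_eq ⟨⟨x, ?_⟩, ?_⟩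
  · exact le_antisymm (capVol_covRad_le_capDisp hd hn x) (capDisp_range_le hx)
  · rintro _ ⟨y, rfl⟩
    exact capVol_covRad_le_capDisp hd hn y

theorem minDens_eq (hd : 1 ≤ d) (hn : 1 ≤ n) : minDens d n = n * capVol d (covRad d n) := by
  obtain ⟨x, hx⟩ := exists_iUnion_cap_covRad_eq_univ (d := d) hn
  have hsum : ∀ (y : Fin n → Sph d) (φ : ℝ),
      ∑ i, (sphMeasure d (cap (y i) φ)).toReal = n * capVol d φ := by
    simp [toReal_sphMeasure_cap]
  refine IsLeast.csInf_eq ⟨⟨_, ⟨covRad_pos hd hn, covRad_le_pi hn⟩, x, hx, (hsum x _).symm⟩, ?_⟩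
  rintro _ ⟨φ, hφ, y, hy, rfl⟩
  rw [hsum]
  exact mul_le_mul_of_nonneg_left (capVol_mono (covRad_le hφ.1 hy)) n.cast_nonneg

end Sphere

/-- For all positive integers `d` and `n`,
`n·disp_C(n,d) = dens(n,d) = n·V(φ(n))`. -/
theorem disp_eq_dens_eq_vol_covRad (d n : ℕ) (hd : 1 ≤ d) (hn : 1 ≤ n) :
    (n : ℝ) * minCapDisp d n = minDens d n ∧
    minDens d n = (n : ℝ) * capVol d (covRad d n) := by
  rw [minCapDisp_eq hd hn, minDens_eq hd hn]
  exact ⟨rfl, rfl⟩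
end
end

section
/- For every d ≥ 1, the minimal spherical cap dispersion satisfies disp_C(1,d) = 1 and disp_C(n,d) = 1/2 for every n with 2 ≤ n ≤ d+1. -/
open scoped Real InnerProductSpace
open MeasureTheory Filter
open scoped Pointwise ENNReal
open Topology

noncomputable section

-- auxiliary
abbrev Ed (d : ℕ) := EuclideanSpace ℝ (Fin (d + 1))

lemma norm_sph {d : ℕ} (y : Sph d) : ‖(y : Ed d)‖ = 1 :=
  mem_sphere_zero_iff_norm.mp y.2

lemma toSphere_univ_eq (d : ℕ) :
    (volume : Measure (Ed d)).toSphere Set.univ =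
      ((d + 1 : ℕ) : ℝ≥0∞) * volume (Metric.ball (0 : Ed d) 1) := by
  rw [Measure.toSphere_apply_univ, finrank_euclideanSpace_fin]

lemma toSphere_univ_ne_zero (d : ℕ) :
    (volume : Measure (Ed d)).toSphere Set.univ ≠ 0 := by
  rw [toSphere_univ_eq]
  refine mul_ne_zero (by exact_mod_cast Nat.succ_ne_zero d) ?_
  exact (Metric.measure_ball_pos _ _ one_pos).ne'

lemma toSphere_univ_ne_top (d : ℕ) :
    (volume : Measure (Ed d)).toSphere Set.univ ≠ ⊤ := by
  rw [toSphere_univ_eq]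
  exact ENNReal.mul_ne_top (by simp) measure_ball_lt_top.ne

lemma sphMeasure_apply {d : ℕ} (s : Set (Sph d)) :
    sphMeasure d s =
      ((volume : Measure (Ed d)).toSphere Set.univ)⁻¹ *
        (volume : Measure (Ed d)).toSphere s := by
  simp [sphMeasure]

lemma sphMeasure_univ (d : ℕ) : sphMeasure d Set.univ = 1 := by
  rw [sphMeasure_apply]
  exact ENNReal.inv_mul_cancel (toSphere_univ_ne_zero d) (toSphere_univ_ne_top d)

lemma sphMeasure_null {d : ℕ} {s : Set (Sph d)} (hs : MeasurableSet s)
    (W : Submodule ℝ (Ed d)) (hW : W ≠ ⊤)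
    (h : ∀ y : Sph d, y ∈ s → (y : Ed d) ∈ W) : sphMeasure d s = 0 := by
  rw [sphMeasure_apply, Measure.toSphere_apply' _ hs]
  have hsub : Set.Ioo (0 : ℝ) 1 • (Subtype.val '' s) ⊆ (W : Set (Ed d)) := by
    rintro z ⟨r, hr, w, ⟨y, hy, rfl⟩, rfl⟩
    exact W.smul_mem r (h y hy)
  have h0 : volume (Set.Ioo (0 : ℝ) 1 • (Subtype.val '' s)) = 0 :=
    measure_mono_null hsub (Measure.addHaar_submodule _ W hW)
  rw [h0]
  simp

lemma vol_neg {d : ℕ} (s : Set (Ed d)) : volume (-s) = volume s := by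
  have h := Measure.addHaar_image_linearMap (volume : Measure (Ed d))
    (-(LinearMap.id (R := ℝ) (M := Ed d))) s
  have hco : ⇑(-(LinearMap.id (R := ℝ) (M := Ed d))) = Neg.neg := by
    funext z; simp
  rw [hco, Set.image_neg_eq_neg] at h
  rw [h]
  have : LinearMap.det (-(LinearMap.id (R := ℝ) (M := Ed d))) = (-1) ^ (d + 1) := by
    have : (-(LinearMap.id (R := ℝ) (M := Ed d))) = (-1 : ℝ) • LinearMap.id := by
      ext z; simp
    rw [this, LinearMap.det_smul, finrank_euclideanSpace_fin, LinearMap.det_id, mul_one]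
  rw [this]
  rcases neg_one_pow_eq_or ℝ (d+1) with h1 | h1 <;> rw [h1] <;> simp

lemma sph_hemi {d : ℕ} (v : Ed d) (hv : ‖v‖ = 1) :
    sphMeasure d {y : Sph d | 0 ≤ ⟪v, (y : Ed d)⟫_ℝ} = 1 / 2 ∧
    sphMeasure d {y : Sph d | 0 < ⟪v, (y : Ed d)⟫_ℝ} = 1 / 2 := by
  have hcont : Continuous fun y : Sph d => ⟪v, (y : Ed d)⟫_ℝ :=
    continuous_const.inner continuous_subtype_val
  set sp := {y : Sph d | 0 ≤ ⟪v, (y : Ed d)⟫_ℝ} with hsp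
  set sm := {y : Sph d | ⟪v, (y : Ed d)⟫_ℝ ≤ 0} with hsm
  have hmp : MeasurableSet sp := (isClosed_le continuous_const hcont).measurableSet
  have hmm : MeasurableSet sm := (isClosed_le hcont continuous_const).measurableSet
  have hv0 : v ≠ 0 := by intro h; rw [h, norm_zero] at hv; norm_num at hv
  have hW : (ℝ ∙ v)ᗮ ≠ ⊤ := by
    intro h
    have hm : v ∈ (ℝ ∙ v)ᗮ := h ▸ Submodule.mem_top
    have h0 : ⟪v, v⟫_ℝ = 0 :=
      Submodule.mem_orthogonal_singleton_iff_inner_right.mp hm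
    rw [real_inner_self_eq_norm_sq, hv] at h0
    norm_num at h0
  have heq0 : sphMeasure d (sp ∩ sm) = 0 := by
    refine sphMeasure_null (hmp.inter hmm) _ hW (fun y hy => ?_)
    exact Submodule.mem_orthogonal_singleton_iff_inner_right.mpr
      (le_antisymm hy.2 hy.1)
  have himg_p : Subtype.val '' sp = {z : Ed d | 0 ≤ ⟪v, z⟫_ℝ} ∩ Metric.sphere 0 1 := by
    ext z
    constructor
    · rintro ⟨y, hy, rfl⟩; exact ⟨hy, y.2⟩
    · rintro ⟨h1, h2⟩; exact ⟨⟨z, h2⟩, h1, rfl⟩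
  have himg_m : Subtype.val '' sm = {z : Ed d | ⟪v, z⟫_ℝ ≤ 0} ∩ Metric.sphere 0 1 := by
    ext z
    constructor
    · rintro ⟨y, hy, rfl⟩; exact ⟨hy, y.2⟩
    · rintro ⟨h1, h2⟩; exact ⟨⟨z, h2⟩, h1, rfl⟩
  have hneg : ({z : Ed d | ⟪v, z⟫_ℝ ≤ 0} ∩ Metric.sphere 0 1) =
      -({z : Ed d | 0 ≤ ⟪v, z⟫_ℝ} ∩ Metric.sphere 0 1) := by
    ext z
    simp only [Set.mem_neg, Set.mem_inter_iff, Set.mem_setOf_eq, mem_sphere_zero_iff_norm,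
      inner_neg_right, norm_neg]
    constructor
    · rintro ⟨h1, h2⟩; exact ⟨by linarith, h2⟩
    · rintro ⟨h1, h2⟩; exact ⟨by linarith, h2⟩
  have hts : (volume : Measure (Ed d)).toSphere sm = (volume : Measure (Ed d)).toSphere sp := by
    rw [Measure.toSphere_apply' _ hmm, Measure.toSphere_apply' _ hmp, himg_m, himg_p, hneg,
      Set.smul_neg, vol_neg]
  have hmeq : sphMeasure d sm = sphMeasure d sp := by
    rw [sphMeasure_apply, sphMeasure_apply, hts]
  have hun : sp ∪ sm = Set.univ := by
    ext y; simp only [Set.mem_union, Set.mem_setOf_eq, Set.mem_univ, iff_true, hsp, hsm]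
    exact (le_total 0 _).imp id id
  have hsum : sphMeasure d sp + sphMeasure d sp = 1 := by
    have h := measure_union_add_inter (μ := sphMeasure d) sp hmm
    rw [hun, sphMeasure_univ, heq0, add_zero, hmeq] at h
    exact h.symm
  have hhalf : sphMeasure d sp = 1 / 2 := by
    have h2 : (2 : ℝ≥0∞) * sphMeasure d sp = 1 := by rw [two_mul]; exact hsum
    calc sphMeasure d sp = 2⁻¹ * (2 * sphMeasure d sp) := by
          rw [← mul_assoc, ENNReal.inv_mul_cancel (by norm_num) (by norm_num), one_mul]
      _ = 2⁻¹ * 1 := by rw [h2]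
      _ = 1 / 2 := by rw [mul_one, one_div]
  refine ⟨hhalf, ?_⟩
  have hdiff : {y : Sph d | 0 < ⟪v, (y : Ed d)⟫_ℝ} = sp \ (sp ∩ sm) := by
    ext y
    simp only [Set.mem_setOf_eq, Set.mem_diff, Set.mem_inter_iff, hsp, hsm]
    constructor
    · intro h; exact ⟨h.le, fun hc => absurd hc.2 (not_le.mpr h)⟩
    · rintro ⟨h1, h2⟩
      rcases lt_or_eq_of_le h1 with h | h
      · exact h
      · exact absurd ⟨h1, h.symm.le⟩ h2
  rw [hdiff, measure_diff_null heq0, hhalf]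

lemma val_le_one {d : ℕ} (s : Set (Sph d)) : (sphMeasure d s).toReal ≤ 1 := by
  have h : sphMeasure d s ≤ 1 := by
    rw [← sphMeasure_univ d]; exact measure_mono (Set.subset_univ s)
  simpa using ENNReal.toReal_mono ENNReal.one_ne_top h

lemma capDisp_bddAbove {d : ℕ} (P : Set (Sph d)) :
    BddAbove {v : ℝ | ∃ x : Sph d, ∃ φ ∈ Set.Icc (0 : ℝ) π,
      cap x φ ∩ P = ∅ ∧ v = (sphMeasure d (cap x φ)).toReal} := by
  refine ⟨1, ?_⟩
  rintro r ⟨x, φ, hφ, hint, rfl⟩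
  exact val_le_one _

lemma capDisp_le {d : ℕ} (P : Set (Sph d)) (b : ℝ) (hb : 0 ≤ b)
    (h : ∀ (x : Sph d) (φ : ℝ), φ ∈ Set.Icc (0 : ℝ) π → cap x φ ∩ P = ∅ →
      (sphMeasure d (cap x φ)).toReal ≤ b) : capDisp P ≤ b := by
  apply Real.sSup_le _ hb
  rintro r ⟨x, φ, hφ, hint, rfl⟩
  exact h x φ hφ hint

lemma capDisp_le_one {d : ℕ} (P : Set (Sph d)) : capDisp P ≤ 1 :=
  capDisp_le P 1 zero_le_one (fun _ _ _ _ => val_le_one _)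

lemma ge_of_caps {d : ℕ} (P : Set (Sph d)) (w : Sph d) (φ₀ : ℝ) (h1 : 1 ≤ φ₀) (hπ : φ₀ ≤ π)
    (havoid : ∀ p ∈ P, φ₀ ≤ geoDist w p) :
    (sphMeasure d {y : Sph d | geoDist w y < φ₀}).toReal ≤ capDisp P := by
  set A : ℕ → Set (Sph d) := fun k => cap w (φ₀ - 1 / (k + 1)) with hA
  have hmono : Monotone A := by
    intro i j hij y hy
    have hle : (1 : ℝ) / (j + 1) ≤ 1 / (i + 1) := by
      apply one_div_le_one_div_of_le (by positivity)
      have : (i : ℝ) ≤ j := Nat.cast_le.mpr hij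
      linarith
    simp only [hA, cap, Set.mem_setOf_eq] at hy ⊢
    linarith
  have hUnion : ⋃ k, A k = {y : Sph d | geoDist w y < φ₀} := by
    ext y
    simp only [Set.mem_iUnion, Set.mem_setOf_eq, hA, cap]
    constructor
    · rintro ⟨k, hk⟩
      have hpos : (0 : ℝ) < 1 / (k + 1) := by positivity
      linarith
    · intro h
      obtain ⟨k, hk⟩ := exists_nat_one_div_lt (sub_pos.mpr h)
      exact ⟨k, by linarith⟩
  have htend : Tendsto (fun k => sphMeasure d (A k)) atTop
      (𝓝 (sphMeasure d (⋃ k, A k))) := tendsto_measure_iUnion_atTop hmono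
  have hne : sphMeasure d (⋃ k, A k) ≠ ⊤ := by
    apply ne_of_lt
    apply lt_of_le_of_lt (measure_mono (Set.subset_univ _))
    rw [sphMeasure_univ]
    exact ENNReal.one_lt_top
  have htendR : Tendsto (fun k => (sphMeasure d (A k)).toReal) atTop
      (𝓝 ((sphMeasure d (⋃ k, A k)).toReal)) := (ENNReal.tendsto_toReal hne).comp htend
  rw [hUnion] at htendR
  refine le_of_tendsto htendR (Eventually.of_forall fun k => ?_)
  have hpos : (0 : ℝ) < 1 / ((k : ℝ) + 1) := by positivity
  have hle1 : (1 : ℝ) / ((k : ℝ) + 1) ≤ 1 := by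
    rw [div_le_one (by positivity)]; linarith
  have hmem : (sphMeasure d (A k)).toReal ∈ {v : ℝ | ∃ x : Sph d, ∃ φ ∈ Set.Icc (0 : ℝ) π,
      cap x φ ∩ P = ∅ ∧ v = (sphMeasure d (cap x φ)).toReal} := by
    refine ⟨w, φ₀ - 1 / (k + 1), ⟨by linarith, by linarith⟩, ?_, rfl⟩
    apply Set.eq_empty_iff_forall_notMem.mpr
    rintro y ⟨hy1, hy2⟩
    have h2 := havoid y hy2
    have h3 : geoDist w y ≤ φ₀ - 1 / (k + 1) := hy1
    linarith
  exact le_csSup (capDisp_bddAbove P) hmem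

lemma sph_singleton_null {d : ℕ} (hd : 1 ≤ d) (x₀ : Sph d) : sphMeasure d {x₀} = 0 := by
  have hx0 : (x₀ : Ed d) ≠ 0 := by
    intro h
    have := norm_sph x₀
    rw [h, norm_zero] at this
    norm_num at this
  refine sphMeasure_null (measurableSet_singleton x₀) (ℝ ∙ (x₀ : Ed d)) ?_ ?_
  · intro h
    have h1 : Module.finrank ℝ (ℝ ∙ (x₀ : Ed d)) = 1 := finrank_span_singleton hx0
    rw [h] at h1
    rw [finrank_top, finrank_euclideanSpace_fin] at h1
    omega
  · intro y hy
    rw [Set.mem_singleton_iff] at hy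
    rw [hy]
    exact Submodule.mem_span_singleton_self _

lemma inner_sph_le_one {d : ℕ} (x y : Sph d) : ⟪(x : Ed d), (y : Ed d)⟫_ℝ ≤ 1 := by
  have := real_inner_le_norm (x : Ed d) (y : Ed d)
  rwa [norm_sph, norm_sph, mul_one] at this

lemma capDisp_singleton {d : ℕ} (hd : 1 ≤ d) (x₀ : Sph d) : capDisp {x₀} = 1 := by
  refine le_antisymm (capDisp_le_one _) ?_
  have hw : -(x₀ : Ed d) ∈ Metric.sphere (0 : Ed d) 1 :=
    mem_sphere_zero_iff_norm.mpr (by rw [norm_neg]; exact norm_sph x₀)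
  set w : Sph d := ⟨-(x₀ : Ed d), hw⟩ with hwdef
  have hinner : ∀ y : Sph d, ⟪(w : Ed d), (y : Ed d)⟫_ℝ = -⟪(x₀ : Ed d), (y : Ed d)⟫_ℝ := by
    intro y; rw [hwdef]; exact inner_neg_left _ _
  have hgeo : geoDist w x₀ = π := by
    unfold geoDist
    rw [hinner, real_inner_self_eq_norm_sq, norm_sph]
    norm_num [Real.arccos_neg_one]
  have hset : {y : Sph d | geoDist w y < π} = Set.univ \ {x₀} := by
    ext y
    simp only [Set.mem_setOf_eq, Set.mem_diff, Set.mem_univ, true_and, Set.mem_singleton_iff]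
    constructor
    · intro h he
      rw [he, hgeo] at h
      exact lt_irrefl _ h
    · intro hne
      refine lt_of_le_of_ne (Real.arccos_le_pi _) (fun he => hne ?_)
      have h1 : ⟪(w : Ed d), (y : Ed d)⟫_ℝ ≤ -1 := Real.arccos_eq_pi.mp he
      rw [hinner] at h1
      have h2 : (1 : ℝ) ≤ ⟪(x₀ : Ed d), (y : Ed d)⟫_ℝ := by linarith
      have h3 : ⟪(x₀ : Ed d), (y : Ed d)⟫_ℝ = 1 := le_antisymm (inner_sph_le_one _ _) h2
      have h4 : (x₀ : Ed d) = (y : Ed d) :=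
        (inner_eq_one_iff_of_norm_eq_one (norm_sph x₀) (norm_sph y)).mp h3
      exact Subtype.ext h4.symm
  have hge := ge_of_caps {x₀} w π (by linarith [Real.pi_gt_three]) le_rfl
    (fun p hp => by rw [Set.mem_singleton_iff] at hp; rw [hp, hgeo])
  calc (1 : ℝ) = (sphMeasure d {y : Sph d | geoDist w y < π}).toReal := by
        rw [hset, measure_diff_null (sph_singleton_null hd x₀), sphMeasure_univ]
        simp
    _ ≤ capDisp {x₀} := hge

lemma exists_unit {d n : ℕ} (hn0 : 0 < n) (hn : n ≤ d + 1) (x : Fin n → Sph d) :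
    ∃ v : Sph d, ∀ i, ⟪(v : Ed d), (x i : Ed d)⟫_ℝ ≤ 0 := by
  obtain ⟨u, hu0, hu⟩ : ∃ u : Ed d, u ≠ 0 ∧ ∀ i, ⟪(x i : Ed d), u⟫_ℝ ≤ 0 := by
    set T : Ed d →ₗ[ℝ] (Fin n → ℝ) :=
      LinearMap.pi (fun i => ((innerSL ℝ ((x i : Ed d))) : Ed d →ₗ[ℝ] ℝ)) with hT
    have hTapp : ∀ (u : Ed d) (i : Fin n), T u i = ⟪(x i : Ed d), u⟫_ℝ := by
      intro u i; rw [hT]; rfl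
    by_cases hker : LinearMap.ker T = ⊥
    · have hinj : Function.Injective T := LinearMap.ker_eq_bot.mp hker
      have heq : Module.finrank ℝ (Ed d) = Module.finrank ℝ (Fin n → ℝ) := by
        have hle := LinearMap.finrank_le_finrank_of_injective hinj
        rw [finrank_euclideanSpace_fin, Module.finrank_fin_fun] at hle ⊢
        omega
      have hsurj : Function.Surjective T :=
        (LinearMap.injective_iff_surjective_of_finrank_eq_finrank heq).mp hinj
      obtain ⟨u, hu⟩ := hsurj (fun _ => -1)
      refine ⟨u, ?_, fun i => ?_⟩
      · intro h
        rw [h, map_zero] at hu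
        have := congrFun hu ⟨0, hn0⟩
        norm_num at this
      · have h1 := congrFun hu i
        rw [hTapp] at h1
        rw [h1]
        norm_num
    · obtain ⟨u, huk, hu0⟩ := Submodule.exists_mem_ne_zero_of_ne_bot hker
      refine ⟨u, hu0, fun i => ?_⟩
      have hk : T u = 0 := huk
      have h2 := congrFun hk i
      rw [hTapp, Pi.zero_apply] at h2
      exact h2.le
  refine ⟨⟨‖u‖⁻¹ • u, mem_sphere_zero_iff_norm.mpr (norm_smul_inv_norm hu0)⟩, fun i => ?_⟩
  show ⟪‖u‖⁻¹ • u, (x i : Ed d)⟫_ℝ ≤ 0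
  rw [real_inner_smul_left]
  refine mul_nonpos_of_nonneg_of_nonpos (inv_nonneg.mpr (norm_nonneg u)) ?_
  rw [real_inner_comm]
  exact hu i

lemma half_toReal : ((1 : ENNReal) / 2).toReal = 1 / 2 := by
  rw [ENNReal.toReal_div]
  norm_num

lemma capDisp_ge_half {d n : ℕ} (hn0 : 0 < n) (hn : n ≤ d + 1) (x : Fin n → Sph d) :
    1 / 2 ≤ capDisp (Set.range x) := by
  obtain ⟨v, hv⟩ := exists_unit hn0 hn x
  have havoid : ∀ p ∈ Set.range x, π / 2 ≤ geoDist v p := by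
    rintro p ⟨i, rfl⟩
    unfold geoDist
    by_contra h
    push_neg at h
    have := Real.arccos_lt_pi_div_two.mp h
    linarith [hv i]
  have h := ge_of_caps (Set.range x) v (π / 2) (by linarith [Real.pi_gt_three])
    (by linarith [Real.pi_pos]) havoid
  have hset : {y : Sph d | geoDist v y < π / 2} =
      {y : Sph d | 0 < ⟪(v : Ed d), (y : Ed d)⟫_ℝ} := by
    ext y
    simp only [Set.mem_setOf_eq]
    exact Real.arccos_lt_pi_div_two
  rw [hset, (sph_hemi (v : Ed d) (norm_sph v)).2, half_toReal] at h
  exact h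

def ptS (d : ℕ) : Sph d :=
  ⟨EuclideanSpace.single 0 1, mem_sphere_zero_iff_norm.mpr (by
    rw [EuclideanSpace.norm_single]; norm_num)⟩

lemma capDisp_pair {d n : ℕ} (hn : 2 ≤ n) :
    ∃ x : Fin n → Sph d, capDisp (Set.range x) ≤ 1 / 2 := by
  set eS : Sph d := ptS d with heS
  have hneg : -(eS : Ed d) ∈ Metric.sphere (0 : Ed d) 1 :=
    mem_sphere_zero_iff_norm.mpr (by rw [norm_neg]; exact norm_sph eS)
  set eN : Sph d := ⟨-(eS : Ed d), hneg⟩ with heN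
  set x : Fin n → Sph d := fun i => if i = ⟨0, by omega⟩ then eS else eN with hx
  refine ⟨x, capDisp_le _ _ (by norm_num) ?_⟩
  intro y φ hφ hint
  have hnotin : ∀ p ∈ Set.range x, p ∉ cap y φ := fun p hp hc =>
    Set.eq_empty_iff_forall_notMem.mp hint p ⟨hc, hp⟩
  have hmem0 : eS ∈ Set.range x := ⟨⟨0, by omega⟩, by rw [hx]; simp⟩
  have hmem1 : eN ∈ Set.range x := ⟨⟨1, by omega⟩, by rw [hx]; simp [Fin.ext_iff]⟩
  have h0 : ¬ geoDist y eS ≤ φ := hnotin eS hmem0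
  have h1 : ¬ geoDist y eN ≤ φ := hnotin eN hmem1
  push_neg at h0 h1
  have harc : geoDist y eN = π - geoDist y eS := by
    unfold geoDist
    rw [heN]
    show Real.arccos ⟪(y : Ed d), -(eS : Ed d)⟫_ℝ = π - Real.arccos ⟪(y : Ed d), (eS : Ed d)⟫_ℝ
    rw [inner_neg_right, Real.arccos_neg]
  have hφ2 : φ < π / 2 := by rw [harc] at h1; linarith
  have hsub : cap y φ ⊆ {z : Sph d | 0 < ⟪(y : Ed d), (z : Ed d)⟫_ℝ} := by
    intro z hz
    have hz2 : geoDist y z < π / 2 := lt_of_le_of_lt hz hφ2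
    exact Real.arccos_lt_pi_div_two.mp hz2
  have hm := measure_mono (μ := sphMeasure d) hsub
  rw [(sph_hemi _ (norm_sph y)).2] at hm
  have := ENNReal.toReal_mono (by norm_num) hm
  rw [half_toReal] at this
  exact this


/-- For every `d ≥ 1`, `disp_C(1,d) = 1` and
`disp_C(n,d) = 1/2` for all `2 ≤ n ≤ d+1`. -/
theorem minCapDisp_small_n (d : ℕ) (hd : 1 ≤ d) :
    minCapDisp d 1 = 1 ∧
    ∀ n : ℕ, 2 ≤ n → n ≤ d + 1 → minCapDisp d n = 1 / 2 := by
  constructor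
  · have hall : ∀ x : Fin 1 → Sph d, capDisp (Set.range x) = 1 := by
      intro x
      have hr : Set.range x = {x 0} := by
        rw [Set.range_unique, Fin.default_eq_zero]
      rw [hr]
      exact capDisp_singleton hd (x 0)
    have hset : {v : ℝ | ∃ x : Fin 1 → Sph d, v = capDisp (Set.range x)} = {1} := by
      ext r
      simp only [Set.mem_setOf_eq, Set.mem_singleton_iff]
      constructor
      · rintro ⟨x, rfl⟩; exact hall x
      · rintro rfl; exact ⟨fun _ => ptS d, (hall _).symm⟩
    rw [minCapDisp, hset, csInf_singleton]
  · intro n hn2 hnd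
    obtain ⟨x₀, hx₀⟩ := capDisp_pair (d := d) (n := n) hn2
    have hlb : ∀ r ∈ {v : ℝ | ∃ x : Fin n → Sph d, v = capDisp (Set.range x)}, 1 / 2 ≤ r := by
      rintro r ⟨x, rfl⟩
      exact capDisp_ge_half (by omega) hnd x
    have hmem : capDisp (Set.range x₀) ∈
        {v : ℝ | ∃ x : Fin n → Sph d, v = capDisp (Set.range x)} := ⟨x₀, rfl⟩
    rw [minCapDisp]
    refine le_antisymm (le_trans (csInf_le ⟨1 / 2, hlb⟩ hmem) hx₀) (le_csInf ⟨_, hmem⟩ hlb)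
end
end

section
/- For every integer d ≥ 2 and every φ ∈ (0, π/2), the normalized volume of a spherical cap satisfies (1/√(2π(d+1)))·sin^d φ ≤ V(φ) ≤ (1/2)·sin^d φ. -/
/-!
Write `n = d - 1` and `Iₙ = ∫₀^π sinⁿ`, so that `V(φ) = (∫₀^φ sinⁿ) / Iₙ` by symmetry of `sin`
about `π/2`.

Lower bound: `sinⁿ t ≥ sinⁿ t cos t`, whose integral is `sinⁿ⁺¹ φ / (n+1)`, and the Wallis-type
estimate `(n+1) Iₙ ≤ √(2π(n+2))`, which follows from `(n+1) Iₙ Iₙ₊₁ = 2π` (the reduction formula)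
and `Iₙ₊₂ ≤ Iₙ₊₁`.

Upper bound: the substitution `sin t = sin φ · sin s` maps `s ∈ [0, π/2]` onto `t ∈ [0, φ]` with
`dt = sin φ cos s / cos t ds ≤ sin φ ds`, hence `∫₀^φ sinⁿ ≤ sinⁿ⁺¹ φ · Iₙ / 2`.
-/

open scoped Real InnerProductSpace
open MeasureTheory Filter

noncomputable section

/-- Normalized volume of a spherical cap of geodesic radius `φ` on `S^d`,
given by `V(φ) = (∫_0^φ sin^{d-1} t dt) / (2 ∫_0^{π/2} sin^{d-1} t dt)`. -/
def capVolInt (d : ℕ) (φ : ℝ) : ℝ :=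
  (∫ t in (0 : ℝ)..φ, Real.sin t ^ (d - 1)) /
    (2 * ∫ t in (0 : ℝ)..(π / 2), Real.sin t ^ (d - 1))

open Real intervalIntegral

theorem integral_sin_pow_zero_pi_div_two (n : ℕ) :
    ∫ t in (0 : ℝ)..π / 2, sin t ^ n = (∫ t in (0 : ℝ)..π, sin t ^ n) / 2 := by
  have hsymm : ∫ t in (0 : ℝ)..π / 2, sin t ^ n = ∫ t in π / 2..π, sin t ^ n := by
    simpa only [sin_pi_sub, sub_zero, sub_half] using
      integral_comp_sub_left (fun t => sin t ^ n) π (a := 0) (b := π / 2)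
  have hint : ∀ a b : ℝ, IntervalIntegrable (fun t => sin t ^ n) volume a b :=
    fun _ _ => (continuous_sin.pow n).intervalIntegrable _ _
  linarith [integral_add_adjacent_intervals (hint 0 (π / 2)) (hint (π / 2) π)]

theorem integral_sin_pow_add_two_zero_pi (n : ℕ) :
    ∫ t in (0 : ℝ)..π, sin t ^ (n + 2) = (n + 1) / (n + 2) * ∫ t in (0 : ℝ)..π, sin t ^ n := by
  simp [integral_sin_pow]

theorem succ_mul_integral_sin_pow_mul_integral_sin_pow_succ (n : ℕ) :
    (n + 1) * (∫ t in (0 : ℝ)..π, sin t ^ n) * ∫ t in (0 : ℝ)..π, sin t ^ (n + 1) = 2 * π := by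
  induction n with
  | zero => norm_num [integral_sin]; ring
  | succ n ih =>
    rw [integral_sin_pow_add_two_zero_pi]
    push_cast
    field_simp
    linear_combination ((n : ℝ) + 2) * ih

theorem succ_mul_integral_sin_pow_le_sqrt (n : ℕ) :
    (n + 1) * ∫ t in (0 : ℝ)..π, sin t ^ n ≤ √(2 * π * (n + 2)) := by
  have hpos := integral_sin_pow_pos n
  have hratio : (n + 1) * ∫ t in (0 : ℝ)..π, sin t ^ n ≤
      (n + 2) * ∫ t in (0 : ℝ)..π, sin t ^ (n + 1) := by
    have h := integral_sin_pow_succ_le (n + 1)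
    rw [integral_sin_pow_add_two_zero_pi, div_mul_eq_mul_div, div_le_iff₀ (by positivity)] at h
    linarith
  have hprod := succ_mul_integral_sin_pow_mul_integral_sin_pow_succ n
  apply le_sqrt_of_sq_le
  calc ((n + 1) * ∫ t in (0 : ℝ)..π, sin t ^ n) ^ 2
      ≤ ((n + 1) * ∫ t in (0 : ℝ)..π, sin t ^ n) * ((n + 2) * ∫ t in (0 : ℝ)..π, sin t ^ (n + 1)) :=
        by rw [sq]; gcongr
    _ = 2 * π * (n + 2) := by linear_combination ((n : ℝ) + 2) * hprod

theorem sin_pow_succ_div_succ_le_integral_sin_pow (n : ℕ) {φ : ℝ} (hφ₀ : 0 ≤ φ) (hφ : φ ≤ π) :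
    sin φ ^ (n + 1) / (n + 1) ≤ ∫ t in (0 : ℝ)..φ, sin t ^ n := by
  have hprim : ∫ t in (0 : ℝ)..φ, sin t ^ n * cos t = sin φ ^ (n + 1) / (n + 1) := by
    simpa using integral_sin_pow_mul_cos_pow_odd (a := 0) (b := φ) n 0
  rw [← hprim]
  refine integral_mono_on hφ₀ (by apply Continuous.intervalIntegrable; fun_prop)
    (by apply Continuous.intervalIntegrable; fun_prop) fun t ht => ?_
  exact mul_le_of_le_one_right (pow_nonneg (sin_nonneg_of_mem_Icc ⟨ht.1, ht.2.trans hφ⟩) n)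
    (cos_le_one t)

theorem one_sub_sq_mul_sin_pos {c : ℝ} (hc : c ^ 2 < 1) (s : ℝ) : 0 < 1 - (c * sin s) ^ 2 := by
  rw [mul_pow]
  nlinarith [mul_le_mul_of_nonneg_left (sin_sq_le_one s) (sq_nonneg c)]

theorem hasDerivAt_arcsin_mul_sin {c : ℝ} (hc : c ^ 2 < 1) (s : ℝ) :
    HasDerivAt (fun s => arcsin (c * sin s)) (c * cos s / √(1 - (c * sin s) ^ 2)) s := by
  have := one_sub_sq_mul_sin_pos hc s
  exact ((hasDerivAt_arcsin (by nlinarith) (by nlinarith)).comp s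
    ((hasDerivAt_sin s).const_mul c)).congr_deriv (by ring)

theorem mul_cos_div_sqrt_le {c s : ℝ} (hc₀ : 0 ≤ c) (hc₁ : c ≤ 1)
    (hs : s ∈ Set.Icc (-(π / 2)) (π / 2)) :
    c * cos s / √(1 - (c * sin s) ^ 2) ≤ c := by
  refine div_le_of_le_mul₀ (sqrt_nonneg _) hc₀ (mul_le_mul_of_nonneg_left ?_ hc₀)
  rw [cos_eq_sqrt_one_sub_sin_sq hs.1 hs.2, mul_pow]
  gcongr
  nlinarith [mul_le_mul_of_nonneg_right (pow_le_one₀ hc₀ hc₁ : c ^ 2 ≤ 1) (sq_nonneg (sin s))]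

theorem integral_sin_pow_le_sin_pow_succ_mul (n : ℕ) {φ : ℝ} (hφ₀ : 0 ≤ φ) (hφ : φ < π / 2) :
    ∫ t in (0 : ℝ)..φ, sin t ^ n ≤ sin φ ^ (n + 1) * ∫ t in (0 : ℝ)..π / 2, sin t ^ n := by
  set c := sin φ
  have hc₀ : 0 ≤ c := sin_nonneg_of_nonneg_of_le_pi hφ₀ (by linarith [pi_pos])
  have hc₁ : c < 1 := by
    simpa using sin_lt_sin_of_lt_of_le_pi_div_two (by linarith [pi_pos]) le_rfl hφ
  have hc : c ^ 2 < 1 := by nlinarith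
  set f' := fun s => c * cos s / √(1 - (c * sin s) ^ 2)
  have hcont : Continuous f' := by
    fun_prop (disch := exact fun s => (sqrt_pos.2 (one_sub_sq_mul_sin_pos hc s)).ne')
  have hsubst : ∫ s in (0 : ℝ)..π / 2, ((fun t => sin t ^ n) ∘ fun s => arcsin (c * sin s)) s * f' s
      = ∫ t in (0 : ℝ)..φ, sin t ^ n := by
    rw [integral_comp_mul_deriv (fun s _ => hasDerivAt_arcsin_mul_sin hc s) hcont.continuousOn
      (by fun_prop)]
    simp [c, arcsin_sin (by linarith [pi_pos] : -(π / 2) ≤ φ) hφ.le]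
  rw [← hsubst, ← intervalIntegral.integral_const_mul]
  refine integral_mono_on (by positivity)
    ((((continuous_sin.pow n).comp (by fun_prop : Continuous fun s => arcsin (c * sin s))).mul
      hcont).intervalIntegrable _ _)
    (by apply Continuous.intervalIntegrable; fun_prop) fun s hs => ?_
  have hsin : 0 ≤ sin s := sin_nonneg_of_nonneg_of_le_pi hs.1 (by linarith [hs.2, pi_pos])
  have hmem : c * sin s ∈ Set.Icc (-1) 1 := ⟨by nlinarith, by nlinarith [sin_le_one s]⟩
  calc ((fun t => sin t ^ n) ∘ fun s => arcsin (c * sin s)) s * f' s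
      = (c * sin s) ^ n * f' s := by simp only [Function.comp_apply, sin_arcsin hmem.1 hmem.2]
    _ ≤ (c * sin s) ^ n * c := by
      gcongr
      exact mul_cos_div_sqrt_le hc₀ hc₁.le ⟨by linarith [hs.1, pi_pos], hs.2⟩
    _ = c ^ (n + 1) * sin s ^ n := by ring

/-- For every `d ≥ 2` and `φ ∈ (0, π/2)`,
`(1/√(2π(d+1)))·sin^d φ ≤ V(φ) ≤ (1/2)·sin^d φ`. -/
theorem capVolInt_bounds (d : ℕ) (hd : 2 ≤ d) (φ : ℝ)
    (hφ : φ ∈ Set.Ioo (0 : ℝ) (π / 2)) :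
    1 / Real.sqrt (2 * π * (d + 1)) * Real.sin φ ^ d ≤ capVolInt d φ ∧
    capVolInt d φ ≤ 1 / 2 * Real.sin φ ^ d := by
  obtain ⟨n, rfl⟩ : ∃ n, d = n + 1 := ⟨d - 1, by omega⟩
  obtain ⟨hφ₀, hφ⟩ := hφ
  have hI := integral_sin_pow_pos n
  have hsin : 0 < sin φ := sin_pos_of_pos_of_lt_pi hφ₀ (by linarith [pi_pos])
  rw [capVolInt, Nat.add_sub_cancel, integral_sin_pow_zero_pi_div_two, mul_div_cancel₀ _ two_ne_zero]
  constructor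
  · calc 1 / √(2 * π * (↑(n + 1) + 1)) * sin φ ^ (n + 1)
        ≤ sin φ ^ (n + 1) / (n + 1) / ∫ t in (0 : ℝ)..π, sin t ^ n := by
          rw [div_div, one_div_mul_eq_div]
          gcongr
          push_cast
          rw [add_assoc, one_add_one_eq_two]
          exact succ_mul_integral_sin_pow_le_sqrt n
      _ ≤ _ := by gcongr; exact sin_pow_succ_div_succ_le_integral_sin_pow n hφ₀.le (by linarith)
  · rw [div_le_iff₀ hI]
    have := integral_sin_pow_le_sin_pow_succ_mul n hφ₀.le hφ
    rw [integral_sin_pow_zero_pi_div_two] at this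
    linarith
end
end

section
/- For every integer d ≥ 2 and every α ∈ (0, π/2), one has e^{−(d−1)α²/(2cos²α)}·√((d−1)/(2π))·α ≤ 1/2 − V(π/2 − α) ≤ √(d/(2π))·α. -/
open scoped Real InnerProductSpace
open MeasureTheory Filter

noncomputable section

namespace CapAux

open Real

/-- Wallis integral `∫_0^{π/2} sin^n`. -/
def W (n : ℕ) : ℝ := ∫ t in (0:ℝ)..(π/2), Real.sin t ^ n

lemma W_zero : W 0 = π / 2 := by simp [W]

lemma W_one : W 1 = 1 := by simp [W, integral_sin]

lemma W_rec (n : ℕ) : W (n + 2) = (n + 1) / (n + 2) * W n := by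
  unfold W
  rw [integral_sin_pow]
  simp

lemma W_mul (n : ℕ) : W n * W (n + 1) = π / (2 * (n + 1)) := by
  induction n with
  | zero => simp [W_zero, W_one]
  | succ n ih =>
    have h2 : ((n : ℝ) + 2) ≠ 0 := by positivity
    rw [show n + 1 + 1 = n + 2 from rfl, W_rec n,
      show W (n+1) * ((↑n + 1) / (↑n + 2) * W n) =
        (↑n + 1) / (↑n + 2) * (W n * W (n+1)) from by ring, ih]
    push_cast
    field_simp
    ring

lemma W_nonneg (n : ℕ) : 0 ≤ W n := by
  apply intervalIntegral.integral_nonneg (by positivity)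
  intro t ht
  exact pow_nonneg (Real.sin_nonneg_of_nonneg_of_le_pi ht.1
    (ht.2.trans (by linarith [Real.pi_pos]))) n

lemma W_pos (n : ℕ) : 0 < W n := by
  rcases (W_nonneg n).lt_or_eq with h | h
  · exact h
  · exfalso
    have := W_mul n
    rw [← h, zero_mul] at this
    have hπ : (0:ℝ) < π / (2 * (n + 1)) := by positivity
    linarith

lemma W_antitone (n : ℕ) : W (n + 1) ≤ W n := by
  apply intervalIntegral.integral_mono_on (by positivity)
    (Continuous.intervalIntegrable (by fun_prop) _ _)
    (Continuous.intervalIntegrable (by fun_prop) _ _)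
  intro t ht
  have h0 : 0 ≤ Real.sin t := Real.sin_nonneg_of_nonneg_of_le_pi ht.1
    (ht.2.trans (by linarith [Real.pi_pos]))
  exact pow_le_pow_of_le_one h0 (Real.sin_le_one t) (Nat.le_succ n)

lemma W_sq_le (n : ℕ) : W (n + 1) ^ 2 ≤ π / (2 * (n + 1)) := by
  calc W (n + 1) ^ 2 = W (n + 1) * W (n + 1) := sq (W (n+1)) ▸ by ring
    _ ≤ W n * W (n + 1) := by
        exact mul_le_mul_of_nonneg_right (W_antitone n) (W_nonneg _)
    _ = π / (2 * (n + 1)) := W_mul n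

lemma le_W_sq (n : ℕ) : π / (2 * (n + 2)) ≤ W (n + 1) ^ 2 := by
  have := W_mul (n + 1)
  push_cast at this
  calc π / (2 * (n + 2)) = W (n + 1) * W (n + 2) := by rw [this]; push_cast; ring_nf
    _ ≤ W (n + 1) * W (n + 1) := by
        exact mul_le_mul_of_nonneg_left (W_antitone (n + 1)) (W_nonneg _)
    _ = W (n + 1) ^ 2 := by ring

/-- The key exponential bound: `exp(-α²/(2cos²α)) ≤ cos α`. -/
lemma exp_le_cos {α : ℝ} (h0 : 0 < α) (h1 : α < π / 2) :
    Real.exp (-α ^ 2 / (2 * Real.cos α ^ 2)) ≤ Real.cos α := by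
  have hc : 0 < Real.cos α := Real.cos_pos_of_mem_Ioo ⟨by linarith, h1⟩
  have hc1 : Real.cos α ≤ 1 := Real.cos_le_one α
  rw [← Real.le_log_iff_exp_le hc]
  have hlog : Real.log (Real.cos α)⁻¹ ≤ (Real.cos α)⁻¹ - 1 :=
    Real.log_le_sub_one_of_pos (by positivity)
  rw [Real.log_inv] at hlog
  have hcos2 : 1 - α ^ 2 / 2 ≤ Real.cos α := Real.one_sub_sq_div_two_le_cos
  have hlog' : -Real.log (Real.cos α) * Real.cos α ≤ 1 - Real.cos α := by
    have := mul_le_mul_of_nonneg_right hlog hc.le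
    rw [sub_mul, inv_mul_cancel₀ hc.ne'] at this
    linarith
  have key : 2 * Real.cos α * (1 - Real.cos α) ≤ α ^ 2 := by nlinarith
  have h4 : -(1 - Real.cos α) ≤ Real.log (Real.cos α) * Real.cos α := by nlinarith
  have h5 := mul_le_mul_of_nonneg_right h4 (by positivity : (0:ℝ) ≤ 2 * Real.cos α)
  rw [div_le_iff₀ (by positivity : (0:ℝ) < 2 * Real.cos α ^ 2)]
  nlinarith [key, h5]

end CapAux

/-- For every `d ≥ 2` and `α ∈ (0, π/2)`,
`e^{−(d−1)α²/(2cos²α)}·√((d−1)/(2π))·α ≤ 1/2 − V(π/2 − α) ≤ √(d/(2π))·α`. -/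
theorem capVolInt_near_half (d : ℕ) (hd : 2 ≤ d) (α : ℝ)
    (hα : α ∈ Set.Ioo (0 : ℝ) (π / 2)) :
    Real.exp (-(((d : ℝ) - 1) * α ^ 2) / (2 * Real.cos α ^ 2)) *
        Real.sqrt (((d : ℝ) - 1) / (2 * π)) * α ≤
      1 / 2 - capVolInt d (π / 2 - α) ∧
    1 / 2 - capVolInt d (π / 2 - α) ≤ Real.sqrt ((d : ℝ) / (2 * π)) * α := by
  obtain ⟨m, rfl⟩ : ∃ m, d = m + 2 := ⟨d - 2, by omega⟩
  obtain ⟨hα0, hα1⟩ := hα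
  have hπ : (0:ℝ) < π := Real.pi_pos
  set n : ℕ := m + 1 with hn
  -- the sine-power exponent of `capVolInt (m+2)` is `n`
  have hexp : m + 2 - 1 = n := rfl
  set I : ℝ := CapAux.W n with hI
  have hIpos : 0 < I := CapAux.W_pos n
  set A : ℝ := ∫ t in (0:ℝ)..(π/2 - α), Real.sin t ^ n with hA
  set J : ℝ := ∫ t in (π/2 - α)..(π/2), Real.sin t ^ n with hJ
  have hadd : A + J = I := by
    rw [hA, hJ, hI]
    exact intervalIntegral.integral_add_adjacent_intervals
      (Continuous.intervalIntegrable (by fun_prop) _ _)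
      (Continuous.intervalIntegrable (by fun_prop) _ _)
  have hcap : capVolInt (m + 2) (π/2 - α) = A / (2 * I) := rfl
  have hmain : 1 / 2 - capVolInt (m + 2) (π/2 - α) = J / (2 * I) := by
    rw [hcap]
    field_simp
    linarith [hadd]
  rw [hmain]
  -- bounds on J
  have hle : π / 2 - α ≤ π / 2 := by linarith
  have hsnn : ∀ t ∈ Set.Icc (π/2 - α) (π/2), 0 ≤ Real.sin t := by
    intro t ht
    exact Real.sin_nonneg_of_nonneg_of_le_pi (by linarith [ht.1]) (by linarith [ht.2])
  have hJub : J ≤ α := by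
    have : J ≤ ∫ _ in (π/2 - α)..(π/2), (1:ℝ) := by
      apply intervalIntegral.integral_mono_on hle
        (Continuous.intervalIntegrable (by fun_prop) _ _)
        (Continuous.intervalIntegrable (by fun_prop) _ _)
      intro t ht
      exact pow_le_one₀ (hsnn t ht) (Real.sin_le_one t)
    simpa using this
  have hcosle : ∀ t ∈ Set.Icc (π/2 - α) (π/2), Real.cos α ≤ Real.sin t := by
    intro t ht
    rw [← Real.sin_pi_div_two_sub]
    apply Real.strictMonoOn_sin.monotoneOn
    · constructor <;> [linarith; linarith]
    · constructor <;> [linarith [ht.1]; exact ht.2]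
    · exact ht.1
  have hcpos : 0 < Real.cos α := Real.cos_pos_of_mem_Ioo ⟨by linarith, hα1⟩
  have hJlb : α * Real.cos α ^ n ≤ J := by
    have : (∫ _ in (π/2 - α)..(π/2), Real.cos α ^ n) ≤ J := by
      apply intervalIntegral.integral_mono_on hle
        (Continuous.intervalIntegrable (by fun_prop) _ _)
        (Continuous.intervalIntegrable (by fun_prop) _ _)
      intro t ht
      exact pow_le_pow_left₀ hcpos.le (hcosle t ht) n
    rw [intervalIntegral.integral_const, smul_eq_mul] at this
    calc α * Real.cos α ^ n = (π/2 - (π/2 - α)) * Real.cos α ^ n := by ring_nf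
      _ ≤ J := this
  -- bounds on I
  have hIub : I ^ 2 ≤ π / (2 * (n : ℝ)) := by
    have := CapAux.W_sq_le m
    rw [hI, hn]; push_cast; linarith
  have hIlb : π / (2 * ((n : ℝ) + 1)) ≤ I ^ 2 := by
    have := CapAux.le_W_sq m
    rw [hI, hn]; push_cast
    rw [show ((m:ℝ) + 1 + 1) = (m:ℝ) + 2 from by ring]
    exact this
  -- sqrt facts
  have hnpos : (0:ℝ) < (n:ℝ) := by positivity
  set s₁ : ℝ := Real.sqrt ((n : ℝ) / (2 * π)) with hs₁
  set s₂ : ℝ := Real.sqrt (((n : ℝ) + 1) / (2 * π)) with hs₂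
  have hs₁nn : 0 ≤ s₁ := Real.sqrt_nonneg _
  have hs₂nn : 0 ≤ s₂ := Real.sqrt_nonneg _
  have hs₁sq : s₁ ^ 2 = (n : ℝ) / (2 * π) := Real.sq_sqrt (by positivity)
  have hs₂sq : s₂ ^ 2 = ((n : ℝ) + 1) / (2 * π) := Real.sq_sqrt (by positivity)
  -- s₁ * I ≤ 1/2
  have h1 : s₁ * I ≤ 1 / 2 := by
    have hsq : (s₁ * I) ^ 2 ≤ 1 / 4 := by
      rw [mul_pow, hs₁sq]
      calc (n : ℝ) / (2 * π) * I ^ 2 ≤ (n : ℝ) / (2 * π) * (π / (2 * (n : ℝ))) :=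
            mul_le_mul_of_nonneg_left hIub (by positivity)
        _ = 1 / 4 := by field_simp; ring
    nlinarith [mul_nonneg hs₁nn hIpos.le]
  -- 1/2 ≤ s₂ * I
  have h2 : 1 / 2 ≤ s₂ * I := by
    have hsq : 1 / 4 ≤ (s₂ * I) ^ 2 := by
      rw [mul_pow, hs₂sq]
      calc (1:ℝ)/4 = ((n : ℝ) + 1) / (2 * π) * (π / (2 * ((n : ℝ) + 1))) := by field_simp; ring
        _ ≤ ((n : ℝ) + 1) / (2 * π) * I ^ 2 :=
            mul_le_mul_of_nonneg_left hIlb (by positivity)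
    nlinarith [mul_nonneg hs₂nn hIpos.le]
  have hcast2 : ((m + 2 : ℕ) : ℝ) = (n : ℝ) + 1 := by rw [hn]; push_cast; ring
  rw [hcast2, show ((n:ℝ) + 1 - 1) = (n:ℝ) from by ring, ← hs₁, ← hs₂]
  constructor
  · -- lower bound
    rw [le_div_iff₀ (by positivity)]
    -- exp bound
    have hexpb : Real.exp (-((n : ℝ) * α ^ 2) / (2 * Real.cos α ^ 2)) ≤ Real.cos α ^ n := by
      have base := CapAux.exp_le_cos hα0 hα1
      calc Real.exp (-((n : ℝ) * α ^ 2) / (2 * Real.cos α ^ 2))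
          = Real.exp (-α ^ 2 / (2 * Real.cos α ^ 2)) ^ n := by
            rw [← Real.exp_nat_mul]; congr 1; ring
        _ ≤ Real.cos α ^ n := pow_le_pow_left₀ (Real.exp_nonneg _) base n
    calc Real.exp (-((n : ℝ) * α ^ 2) / (2 * Real.cos α ^ 2)) * s₁ * α * (2 * I)
        ≤ Real.cos α ^ n * s₁ * α * (2 * I) := by
          apply mul_le_mul_of_nonneg_right _ (by positivity)
          apply mul_le_mul_of_nonneg_right _ hα0.le
          exact mul_le_mul_of_nonneg_right hexpb hs₁nn
      _ = (α * Real.cos α ^ n) * (2 * (s₁ * I)) := by ring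
      _ ≤ (α * Real.cos α ^ n) * 1 := by
          apply mul_le_mul_of_nonneg_left (by linarith) (by positivity)
      _ = α * Real.cos α ^ n := by ring
      _ ≤ J := hJlb
  · -- upper bound
    rw [div_le_iff₀ (by positivity)]
    calc J ≤ α := hJub
      _ = α * 1 := by ring
      _ ≤ α * (2 * (s₂ * I)) := by
          apply mul_le_mul_of_nonneg_left (by linarith) hα0.le
      _ = s₂ * α * (2 * I) := by ring
end
end

section
/- For every integer d ≥ 2 and all real numbers δ, w with 0 < δ ≤ w ≤ π, the normalized cap volumes satisfy V(w)/V(δ) ≤ (w/δ)^d. -/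
open scoped Real InnerProductSpace
open MeasureTheory Filter

noncomputable section

/-!
Substituting `t = l s` with `l = w / δ ≥ 1` turns `∫₀^w sin^{d-1}` into `l ∫₀^δ sin^{d-1}(l s) ds`,
and concavity of `sin` on `[0, π]` with `sin 0 = 0` gives `sin (l s) ≤ l sin s`; hence
`∫₀^w sin^{d-1} ≤ l^d ∫₀^δ sin^{d-1}`, while the normalizing constant of `V` cancels in the ratio.
-/

theorem ConcaveOn.apply_mul_le_mul_apply {s : Set ℝ} {f : ℝ → ℝ} (hf : ConcaveOn ℝ s f)
    (h0 : 0 ∈ s) (hf0 : 0 ≤ f 0) {l x : ℝ} (hl : 1 ≤ l) (hlx : l * x ∈ s) :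
    f (l * x) ≤ l * f x := by
  have hl0 : 0 < l := one_pos.trans_le hl
  have hcomb : l⁻¹ • (l * x) + (1 - l⁻¹) • (0 : ℝ) = x := by
    rw [smul_eq_mul, inv_mul_cancel_left₀ hl0.ne', smul_zero, add_zero]
  have hconc := hf.2 hlx h0 (inv_nonneg.2 hl0.le) (sub_nonneg.2 (inv_le_one_of_one_le₀ hl))
    (add_sub_cancel _ _)
  rw [hcomb, smul_eq_mul, smul_eq_mul] at hconc
  have hrest : 0 ≤ (1 - l⁻¹) * f 0 := mul_nonneg (sub_nonneg.2 (inv_le_one_of_one_le₀ hl)) hf0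
  calc f (l * x) = l * (l⁻¹ * f (l * x)) := (mul_inv_cancel_left₀ hl0.ne' _).symm
    _ ≤ l * f x := by gcongr; linarith

theorem Real.sin_mul_le_mul_sin {l x : ℝ} (hl : 1 ≤ l) (hx : 0 ≤ x) (hlx : l * x ≤ π) :
    Real.sin (l * x) ≤ l * Real.sin x :=
  strictConcaveOn_sin_Icc.concaveOn.apply_mul_le_mul_apply ⟨le_rfl, Real.pi_pos.le⟩
    Real.sin_zero.ge hl ⟨by nlinarith, hlx⟩

theorem Real.sin_pow_mul_le {l x : ℝ} (n : ℕ) (hl : 1 ≤ l) (hx : 0 ≤ x) (hlx : l * x ≤ π) :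
    Real.sin (l * x) ^ n ≤ l ^ n * Real.sin x ^ n := by
  rw [← mul_pow]
  exact pow_le_pow_left₀ (Real.sin_nonneg_of_nonneg_of_le_pi (by nlinarith) hlx)
    (Real.sin_mul_le_mul_sin hl hx hlx) n

theorem integral_sin_pow_pos_of_le_pi (n : ℕ) {b : ℝ} (hb : 0 < b) (hbπ : b ≤ π) :
    0 < ∫ t in (0 : ℝ)..b, Real.sin t ^ n :=
  intervalIntegral.intervalIntegral_pos_of_pos_on
    ((Real.continuous_sin.pow n).intervalIntegrable 0 b)
    (fun _ hx ↦ pow_pos (Real.sin_pos_of_pos_of_lt_pi hx.1 (hx.2.trans_le hbπ)) n) hb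

theorem integral_zero_mul_le_pow_succ_mul {f : ℝ → ℝ} (hf : Continuous f) {k : ℕ} {l δ : ℝ}
    (hl : 0 ≤ l) (hδ : 0 ≤ δ) (h : ∀ s ∈ Set.Icc 0 δ, f (l * s) ≤ l ^ k * f s) :
    ∫ t in (0 : ℝ)..l * δ, f t ≤ l ^ (k + 1) * ∫ t in (0 : ℝ)..δ, f t := by
  calc ∫ t in (0 : ℝ)..l * δ, f t = l * ∫ s in (0 : ℝ)..δ, f (l * s) := by simp
    _ ≤ l * ∫ s in (0 : ℝ)..δ, l ^ k * f s := by
      gcongr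
      exact intervalIntegral.integral_mono_on hδ
        ((hf.comp (continuous_const_mul l)).intervalIntegrable 0 δ)
        ((continuous_const.mul hf).intervalIntegrable 0 δ) h
    _ = l ^ (k + 1) * ∫ t in (0 : ℝ)..δ, f t := by
      rw [intervalIntegral.integral_const_mul, pow_succ]; ring

theorem integral_sin_pow_le_div_pow_mul (n : ℕ) {δ w : ℝ} (hδ : 0 < δ) (hδw : δ ≤ w)
    (hw : w ≤ π) :
    ∫ t in (0 : ℝ)..w, Real.sin t ^ n ≤ (w / δ) ^ (n + 1) * ∫ t in (0 : ℝ)..δ, Real.sin t ^ n := by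
  have hl : 1 ≤ w / δ := (one_le_div hδ).2 hδw
  have hlδ : w / δ * δ = w := div_mul_cancel₀ w hδ.ne'
  have hscaled := integral_zero_mul_le_pow_succ_mul (Real.continuous_sin.pow n) (k := n)
    (by positivity) hδ.le fun s hs ↦ Real.sin_pow_mul_le n hl hs.1 <|
      (mul_le_mul_of_nonneg_left hs.2 (by positivity)).trans (hlδ.le.trans hw)
  rwa [hlδ] at hscaled

theorem capVolInt_div_capVolInt (d : ℕ) (φ ψ : ℝ) :
    capVolInt d φ / capVolInt d ψ =
      (∫ t in (0 : ℝ)..φ, Real.sin t ^ (d - 1)) / ∫ t in (0 : ℝ)..ψ, Real.sin t ^ (d - 1) :=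
  div_div_div_cancel_right₀
    (mul_pos two_pos <| integral_sin_pow_pos_of_le_pi _ Real.pi_div_two_pos <|
      by linarith [Real.pi_pos]).ne' _ _

/-- For every `d ≥ 2` and `0 < δ ≤ w ≤ π`,
`V(w)/V(δ) ≤ (w/δ)^d`. -/
theorem capVolInt_ratio_le (d : ℕ) (hd : 2 ≤ d) (δ w : ℝ)
    (hδ : 0 < δ) (hδw : δ ≤ w) (hw : w ≤ π) :
    capVolInt d w / capVolInt d δ ≤ (w / δ) ^ d := by
  obtain ⟨n, rfl⟩ : ∃ n, d = n + 1 := ⟨d - 1, by omega⟩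
  rw [capVolInt_div_capVolInt, Nat.add_sub_cancel,
    div_le_iff₀ (integral_sin_pow_pos_of_le_pi n hδ (hδw.trans hw))]
  exact integral_sin_pow_le_div_pow_mul n hδ hδw hw
end
end
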